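/- arXiv:2304.01815 — 8 statements merged into one kernel-verified Lean document; each statement's English description precedes it below -/
import Mathlib

section
/- Let η : ℝ → ℝ be differentiable and let α : ℝ → ℝ be locally Lipschitz, strictly increasing, with α(0) = 0. If η(0) ≥ 0 and η'(t) ≥ -α(η(t)) for every t ≥ 0, then η(t) ≥ 0 for all t ≥ 0. -/
/-!
If `η` became negative at some `t`, take the last time `s < t` with `η s ≥ 0`. On `(s, t]` we have
`η < 0`, hence `α ∘ η < α 0 = 0` and `η' ≥ -α (η) > 0`, so `η` is monotone on `[s, t]` and
`η t ≥ η s ≥ 0`, a contradiction.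
-/

open Set

theorem exists_last_nonneg_of_neg {f : ℝ → ℝ} {a b : ℝ} (hab : a ≤ b)
    (hf : ContinuousOn f (Icc a b)) (ha : 0 ≤ f a) (hb : f b < 0) :
    ∃ s ∈ Ico a b, 0 ≤ f s ∧ ∀ x ∈ Ioc s b, f x < 0 := by
  have hK : IsCompact (Icc a b ∩ f ⁻¹' Ici 0) :=
    isCompact_Icc.of_isClosed_subset
      (hf.preimage_isClosed_of_isClosed isClosed_Icc isClosed_Ici) inter_subset_left
  obtain ⟨s, ⟨⟨has, hsb⟩, hs⟩, hmax⟩ :=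
    hK.exists_isGreatest ⟨a, ⟨left_mem_Icc.mpr hab, ha⟩⟩
  have hsb' : s < b := hsb.lt_of_ne fun h => (h ▸ hb).not_ge hs
  refine ⟨s, ⟨has, hsb'⟩, hs, fun x ⟨hsx, hxb⟩ => ?_⟩
  by_contra! hx
  exact (hmax ⟨⟨has.trans hsx.le, hxb⟩, hx⟩).not_gt hsx

theorem nonneg_of_deriv_nonneg_of_neg {f : ℝ → ℝ} {a : ℝ} (hf : ContinuousOn f (Ici a))
    (hf' : DifferentiableOn ℝ f (Ioi a)) (ha : 0 ≤ f a)
    (hderiv : ∀ x > a, f x < 0 → 0 ≤ deriv f x) : ∀ t ≥ a, 0 ≤ f t := by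
  intro t ht
  by_contra! hneg
  obtain ⟨s, ⟨has, hst⟩, hs, hlast⟩ :=
    exists_last_nonneg_of_neg ht (hf.mono Icc_subset_Ici_self) ha hneg
  have hmono : MonotoneOn f (Icc s t) := by
    refine monotoneOn_of_deriv_nonneg (convex_Icc s t) (hf.mono ?_) (hf'.mono ?_) ?_
    · exact (Icc_subset_Ici_iff hst.le).mpr has
    · rw [interior_Icc]; exact Ioo_subset_Ioi_self.trans (Ioi_subset_Ioi has)
    · rw [interior_Icc]
      exact fun x hx => hderiv x (has.trans_lt hx.1) (hlast x (Ioo_subset_Ioc_self hx))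
  linarith [hmono (left_mem_Icc.mpr hst.le) (right_mem_Icc.mpr hst.le) hst.le]

theorem cbf_comparison_lemma_general (η α : ℝ → ℝ)
    (hη : Differentiable ℝ η)
    (hα_mono : StrictMono α)
    (hα_zero : α 0 = 0)
    (h_init : 0 ≤ η 0)
    (h_cond : ∀ t ≥ (0 : ℝ), deriv η t ≥ -α (η t)) :
    ∀ t ≥ (0 : ℝ), 0 ≤ η t := by
  refine nonneg_of_deriv_nonneg_of_neg hη.continuous.continuousOn hη.differentiableOn h_init ?_
  intro t ht hneg
  have hα_neg : α (η t) < 0 := hα_zero ▸ hα_mono hneg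
  linarith [h_cond t ht.le]

/-- Scalar comparison lemma underlying the CBF forward-invariance theorem:
if `η` is differentiable, `α` is an extended class-K∞ function (locally
Lipschitz, strictly increasing, `α 0 = 0`), `η 0 ≥ 0` and
`η' t ≥ -α (η t)` for all `t ≥ 0`, then `η t ≥ 0` for all `t ≥ 0`. -/
theorem cbf_comparison_lemma (η α : ℝ → ℝ)
    (hη : Differentiable ℝ η)
    (hα_lip : LocallyLipschitz α)
    (hα_mono : StrictMono α)
    (hα_zero : α 0 = 0)
    (h_init : 0 ≤ η 0)
    (h_cond : ∀ t ≥ (0 : ℝ), deriv η t ≥ -α (η t)) :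
    ∀ t ≥ (0 : ℝ), 0 ≤ η t :=
  cbf_comparison_lemma_general η α hη hα_mono hα_zero h_init h_cond
end

section
/- Consider the control-affine system ẋ(t) = f(x(t)) + g(x(t))u(t) on ℝⁿ, where f : ℝⁿ → ℝⁿ and g : ℝⁿ → ℝⁿˣᵐ are locally Lipschitz, u : ℝ → ℝᵐ, and x : ℝ → ℝⁿ is a differentiable solution. Let h : ℝ × ℝⁿ → ℝ be continuously differentiable, and let α : ℝ → ℝ be locally Lipschitz, strictly increasing, with α(0) = 0. Suppose that for every t ≥ 0 the CBF condition holds along the trajectory: ∂h/∂t(t, x(t)) + ∇ₓh(t, x(t))·(f(x(t)) + g(x(t))u(t)) ≥ -α(h(t, x(t))). If h(0, x(0)) ≥ 0, then h(t, x(t)) ≥ 0 for all t ≥ 0; that is, the time-varying set S(t) = {x : h(t,x) ≥ 0} is forward invariant along the trajectory. -/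
/-!
Along the trajectory, `φ s = h (s, x s)` is differentiable with derivative
`∂h/∂t + ∇ₓh ⬝ (f + g u)`. Wherever `φ s < 0` we have `α (φ s) < α 0 = 0`, so the CBF
condition makes this derivative nonnegative. Hence, after the last time `t₀ ≤ t` at which
`φ ≥ 0`, the function `φ` is monotone, which is incompatible with `φ t < 0 ≤ φ t₀`.
-/

open Set

theorem nonneg_of_deriv_nonneg_of_neg_s1 {φ φ' : ℝ → ℝ} {a : ℝ}
    (hφ : ∀ s ≥ a, HasDerivAt φ (φ' s) s) (ha : 0 ≤ φ a)
    (hφ' : ∀ s > a, φ s < 0 → 0 ≤ φ' s) :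
    ∀ t ≥ a, 0 ≤ φ t := by
  intro t hat
  by_contra! ht
  have hcont : ContinuousOn φ (Icc a t) := fun s hs =>
    (hφ s hs.1).continuousAt.continuousWithinAt
  have hclosed : IsClosed (Icc a t ∩ φ ⁻¹' Ici 0) :=
    hcont.preimage_isClosed_of_isClosed isClosed_Icc isClosed_Ici
  obtain ⟨t₀, ⟨⟨hat₀, ht₀t⟩, hφt₀⟩, hlast⟩ : ∃ t₀, IsGreatest (Icc a t ∩ φ ⁻¹' Ici 0) t₀ :=
    (isCompact_Icc.of_isClosed_subset hclosed inter_subset_left).exists_isGreatest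
      ⟨a, left_mem_Icc.2 hat, ha⟩
  have hneg : ∀ s ∈ Ioc t₀ t, φ s < 0 := fun s hs =>
    not_le.1 fun hs₀ => hs.1.not_ge (hlast ⟨⟨hat₀.trans hs.1.le, hs.2⟩, hs₀⟩)
  have ht₀ : t₀ < t := ht₀t.lt_of_ne (by rintro rfl; exact ht.not_ge hφt₀)
  have hmono : MonotoneOn φ (Icc t₀ t) := by
    refine monotoneOn_of_hasDerivWithinAt_nonneg (f' := φ') (convex_Icc t₀ t)
      (hcont.mono (Icc_subset_Icc_left hat₀)) (fun s hs => ?_) (fun s hs => ?_) <;>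
      rw [interior_Icc] at hs
    · exact (hφ s (hat₀.trans hs.1.le)).hasDerivWithinAt
    · exact hφ' s (hat₀.trans_lt hs.1) (hneg s ⟨hs.1, hs.2.le⟩)
  have hφ_le : φ t₀ ≤ φ t := hmono (left_mem_Icc.2 ht₀.le) (right_mem_Icc.2 ht₀.le) ht₀.le
  exact (hφ_le.trans_lt ht).not_ge hφt₀

theorem HasFDerivAt.hasDerivAt_comp_prodMk {E F : Type*} [NormedAddCommGroup E]
    [NormedSpace ℝ E] [NormedAddCommGroup F] [NormedSpace ℝ F]
    {h : ℝ × E → F} {h' : ℝ × E →L[ℝ] F} {x : ℝ → E} {x' : E} {t : ℝ}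
    (hh : HasFDerivAt h h' (t, x t)) (hx : HasDerivAt x x' t) :
    HasDerivAt (fun s => h (s, x s)) (h' (1, x')) t :=
  hh.comp_hasDerivAt t ((hasDerivAt_id t).prodMk hx)

theorem cbf_forward_invariance_general (n m : ℕ)
    (f : (Fin n → ℝ) → (Fin n → ℝ))
    (g : (Fin n → ℝ) → ((Fin m → ℝ) →L[ℝ] (Fin n → ℝ)))
    (u : ℝ → (Fin m → ℝ))
    (x : ℝ → (Fin n → ℝ))
    (hx : ∀ t : ℝ, HasDerivAt x (f (x t) + g (x t) (u t)) t)
    (h : ℝ × (Fin n → ℝ) → ℝ)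
    (hh : ContDiff ℝ 1 h)
    (α : ℝ → ℝ)
    (hα_mono : StrictMono α)
    (hα_zero : α 0 = 0)
    (h_cbf : ∀ t ≥ (0 : ℝ),
      fderiv ℝ h (t, x t) (1, f (x t) + g (x t) (u t)) ≥ -α (h (t, x t)))
    (h_init : 0 ≤ h (0, x 0)) :
    ∀ t ≥ (0 : ℝ), x t ∈ {y : Fin n → ℝ | 0 ≤ h (t, y)} := by
  have hderiv (s : ℝ) : HasDerivAt (fun s => h (s, x s))
      (fderiv ℝ h (s, x s) (1, f (x s) + g (x s) (u s))) s :=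
    ((hh.differentiable one_ne_zero) (s, x s)).hasFDerivAt.hasDerivAt_comp_prodMk (hx s)
  refine nonneg_of_deriv_nonneg_of_neg_s1 (fun s _ => hderiv s) h_init fun s hs hneg => ?_
  have hα_neg : α (h (s, x s)) < 0 := hα_zero ▸ hα_mono hneg
  linarith [h_cbf s hs.le]

/-- CBF forward invariance along a closed-loop trajectory (Theorem 1).
The control-affine system is `ẋ = f x + g x u`, with `g x` an `n × m`
matrix viewed as a continuous linear map `ℝᵐ →L ℝⁿ`.  If the CBF condition
`∂h/∂t + ∇ₓh ⬝ (f x + g x u) ≥ -α (h (t, x))` holds along the trajectory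
for all `t ≥ 0` and `h (0, x 0) ≥ 0`, then `h (t, x t) ≥ 0` for all `t ≥ 0`,
i.e. `S(t) = {x | h (t, x) ≥ 0}` is forward invariant along the trajectory. -/
theorem cbf_forward_invariance (n m : ℕ)
    (f : (Fin n → ℝ) → (Fin n → ℝ))
    (g : (Fin n → ℝ) → ((Fin m → ℝ) →L[ℝ] (Fin n → ℝ)))
    (hf : LocallyLipschitz f)
    (hg : LocallyLipschitz g)
    (u : ℝ → (Fin m → ℝ))
    (x : ℝ → (Fin n → ℝ))
    (hx : ∀ t : ℝ, HasDerivAt x (f (x t) + g (x t) (u t)) t)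
    (h : ℝ × (Fin n → ℝ) → ℝ)
    (hh : ContDiff ℝ 1 h)
    (α : ℝ → ℝ)
    (hα_lip : LocallyLipschitz α)
    (hα_mono : StrictMono α)
    (hα_zero : α 0 = 0)
    (h_cbf : ∀ t ≥ (0 : ℝ),
      fderiv ℝ h (t, x t) (1, f (x t) + g (x t) (u t)) ≥ -α (h (t, x t)))
    (h_init : 0 ≤ h (0, x 0)) :
    ∀ t ≥ (0 : ℝ), x t ∈ {y : Fin n → ℝ | 0 ≤ h (t, y)} :=
  cbf_forward_invariance_general n m f g u x hx h hh α hα_mono hα_zero h_cbf h_init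
end

section
/- Let E be a finite-dimensional real inner product space, let Ψ : ℝ × E → ℝ be twice continuously differentiable, and write ∇Ψ(t,y) for the gradient of Ψ with respect to its second argument. Let P : E → E be a continuous linear map with ⟨P v, v⟩ ≥ b‖v‖² for all v ∈ E, where b > 0. Suppose z : ℝ → E is differentiable and for all t ≥ 0 satisfies the predictor–corrector relation ∇²_{yy}Ψ(t, z(t))(z'(t)) + ∂_t∇Ψ(t, z(t)) = -P(∇Ψ(t, z(t))). Then for all t ≥ 0, ‖∇Ψ(t, z(t))‖ ≤ e^{-bt}·‖∇Ψ(0, z(0))‖. -/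
open scoped RealInnerProductSpace

/-!
Write `g(t) = ∇Ψ(t, z(t))`. By the chain rule, `g'(t)` is the left-hand side of the
predictor–corrector relation, so `g' = -P g`. Coercivity of `P` then gives
`⟪g', g⟫ ≤ -b ‖g‖²`, hence `e^{bt} g(t)` has non-increasing norm.
-/

open Real Set ContinuousLinearMap

section Decay

variable {E : Type*} [NormedAddCommGroup E] [InnerProductSpace ℝ E]

theorem antitoneOn_norm_of_inner_deriv_nonpos {h h' : ℝ → E} {s : Set ℝ} (hs : Convex ℝ s)
    (hh : ∀ t ∈ s, HasDerivAt h (h' t) t) (hinner : ∀ t ∈ interior s, ⟪h t, h' t⟫ ≤ 0) :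
    AntitoneOn (fun t => ‖h t‖) s := by
  have hsq : AntitoneOn (fun t => ‖h t‖ ^ 2) s :=
    antitoneOn_of_deriv_nonpos hs
      (fun t ht => (hh t ht).norm_sq.continuousAt.continuousWithinAt)
      (fun t ht => (hh t (interior_subset ht)).norm_sq.differentiableAt.differentiableWithinAt)
      (fun t ht => by
        rw [(hh t (interior_subset ht)).norm_sq.deriv]
        linarith [hinner t ht])
  exact fun x hx y hy hxy =>
    (pow_le_pow_iff_left₀ (norm_nonneg _) (norm_nonneg _) two_ne_zero).1 (hsq hx hy hxy)

theorem norm_le_exp_neg_mul_norm_of_inner_deriv_le {g g' : ℝ → E} {b : ℝ}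
    (hg : ∀ t ≥ 0, HasDerivAt g (g' t) t) (hdiss : ∀ t ≥ 0, ⟪g' t, g t⟫ ≤ -b * ‖g t‖ ^ 2)
    {t : ℝ} (ht : 0 ≤ t) : ‖g t‖ ≤ exp (-b * t) * ‖g 0‖ := by
  have hexp : ∀ s : ℝ, HasDerivAt (fun s => exp (b * s)) (exp (b * s) * b) s := fun s => by
    simpa using ((hasDerivAt_id s).const_mul b).exp
  have hanti : AntitoneOn (fun s => ‖exp (b * s) • g s‖) (Ici 0) :=
    antitoneOn_norm_of_inner_deriv_nonpos (convex_Ici 0)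
      (fun s hs => (hexp s).smul (hg s hs))
      (fun s hs => by
        have hdiss_s := real_inner_comm (g' s) (g s) ▸ hdiss s (interior_subset hs)
        have hexpand : ⟪exp (b * s) • g s, exp (b * s) • g' s + (exp (b * s) * b) • g s⟫ =
            exp (b * s) ^ 2 * (⟪g s, g' s⟫ + b * ‖g s‖ ^ 2) := by
          simp only [inner_add_right, real_inner_smul_left, real_inner_smul_right,
            real_inner_self_eq_norm_sq]
          ring
        rw [hexpand]
        exact mul_nonpos_of_nonneg_of_nonpos (by positivity) (by linarith))
  have hmono := hanti self_mem_Ici ht ht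
  simp only [norm_smul, norm_of_nonneg (exp_pos _).le, mul_zero, exp_zero, norm_one, one_mul]
    at hmono
  rw [neg_mul, exp_neg, inv_mul_eq_div, le_div_iff₀ (exp_pos _)]
  linarith

end Decay

section PartialDerivatives

variable {E F G : Type*} [NormedAddCommGroup E] [NormedSpace ℝ E]
  [NormedAddCommGroup F] [NormedSpace ℝ F] [NormedAddCommGroup G] [NormedSpace ℝ G]

theorem fderiv_comp_prodMk_right {f : F × E → G} {x : F} {y : E}
    (hf : DifferentiableAt ℝ f (x, y)) :
    fderiv ℝ (fun y' => f (x, y')) y = (fderiv ℝ f (x, y)).comp (inr ℝ F E) :=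
  (hf.hasFDerivAt.comp y (hasFDerivAt_prodMk_right x y)).fderiv

theorem DifferentiableAt.hasDerivAt_comp_prodMk {f : ℝ × E → F} {z : ℝ → E} {t : ℝ}
    (hf : DifferentiableAt ℝ f (t, z t)) (hz : DifferentiableAt ℝ z t) :
    HasDerivAt (fun s => f (s, z s))
      (fderiv ℝ (fun y => f (t, y)) (z t) (deriv z t) + deriv (fun s => f (s, z t)) t) t := by
  have hpartial_t : deriv (fun s => f (s, z t)) t = fderiv ℝ f (t, z t) (1, 0) :=
    (hf.hasFDerivAt.comp_hasDerivAt t ((hasDerivAt_id t).prodMk (hasDerivAt_const t (z t)))).deriv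
  have htotal := hf.hasFDerivAt.comp_hasDerivAt t ((hasDerivAt_id t).prodMk hz.hasDerivAt)
  rw [fderiv_comp_prodMk_right hf, hpartial_t, comp_apply, inr_apply, ← map_add, Prod.mk_add_mk,
    zero_add, add_zero]
  exact htotal

end PartialDerivatives

theorem ContDiff.gradient_right {E F : Type*} [NormedAddCommGroup E] [InnerProductSpace ℝ E]
    [CompleteSpace E] [NormedAddCommGroup F] [NormedSpace ℝ F] {Ψ : F × E → ℝ}
    {n : WithTop ℕ∞} (hΨ : ContDiff ℝ (n + 1) Ψ) :
    ContDiff ℝ n (fun p : F × E => gradient (fun y => Ψ (p.1, y)) p.2) := by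
  have hpartial : (fun p : F × E => gradient (fun y => Ψ (p.1, y)) p.2) =
      fun p => (InnerProductSpace.toDual ℝ E).symm ((fderiv ℝ Ψ p).comp (inr ℝ F E)) := by
    funext p
    rw [gradient, fderiv_comp_prodMk_right (hΨ.differentiable (by simp) p)]
  rw [hpartial]
  exact (InnerProductSpace.toDual ℝ E).symm.toContinuousLinearEquiv.contDiff.comp
    (((compL ℝ E (F × E) ℝ).flip (inr ℝ F E)).contDiff.comp (hΨ.fderiv_right le_rfl))

theorem predictor_corrector_gradient_decay_general
    (E : Type*) [NormedAddCommGroup E] [InnerProductSpace ℝ E]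
    [FiniteDimensional ℝ E]
    (Ψ : ℝ × E → ℝ) (hΨ : ContDiff ℝ 2 Ψ)
    (gradΨ : ℝ → E → E)
    (hgrad : ∀ t y, gradΨ t y = gradient (fun y' => Ψ (t, y')) y)
    (P : E →L[ℝ] E) (b : ℝ)
    (hP : ∀ v : E, b * ‖v‖ ^ 2 ≤ ⟪P v, v⟫)
    (z : ℝ → E) (hz : Differentiable ℝ z)
    (hdyn : ∀ t ≥ (0 : ℝ),
      fderiv ℝ (fun y => gradΨ t y) (z t) (deriv z t)
        + deriv (fun s => gradΨ s (z t)) t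
      = -P (gradΨ t (z t))) :
    ∀ t ≥ (0 : ℝ),
      ‖gradΨ t (z t)‖ ≤ Real.exp (-b * t) * ‖gradΨ 0 (z 0)‖ := by
  obtain rfl : gradΨ = fun t y => gradient (fun y' => Ψ (t, y')) y := funext₂ hgrad
  have hG : Differentiable ℝ fun p : ℝ × E => gradient (fun y => Ψ (p.1, y)) p.2 :=
    (ContDiff.gradient_right (n := 1) hΨ).differentiable one_ne_zero
  have hflow : ∀ t ≥ 0, HasDerivAt (fun s => gradient (fun y => Ψ (s, y)) (z s))
      (-P (gradient (fun y => Ψ (t, y)) (z t))) t := fun t ht =>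
    hdyn t ht ▸ (hG _).hasDerivAt_comp_prodMk (hz t)
  refine fun t ht => norm_le_exp_neg_mul_norm_of_inner_deriv_le hflow (fun s _ => ?_) ht
  rw [inner_neg_left]
  linarith [hP (gradient (fun y => Ψ (s, y)) (z s))]

/-- Exponential decay of the gradient along predictor–corrector interior
point dynamics (first part of Lemma 1).  Here `∇Ψ t y` denotes the gradient
of `Ψ` with respect to its second argument, the Hessian is the Fréchet
derivative of the gradient map in `y`, and `∂_t∇Ψ` is the time derivative of
the gradient map.  The predictor–corrector relation
`∇²Ψ(t, z t)(z' t) + ∂_t∇Ψ(t, z t) = -P (∇Ψ(t, z t))` implies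
`‖∇Ψ(t, z t)‖ ≤ e^{-b t} ‖∇Ψ(0, z 0)‖` for all `t ≥ 0`. -/
theorem predictor_corrector_gradient_decay
    (E : Type*) [NormedAddCommGroup E] [InnerProductSpace ℝ E]
    [FiniteDimensional ℝ E]
    (Ψ : ℝ × E → ℝ) (hΨ : ContDiff ℝ 2 Ψ)
    (gradΨ : ℝ → E → E)
    (hgrad : ∀ t y, gradΨ t y = gradient (fun y' => Ψ (t, y')) y)
    (P : E →L[ℝ] E) (b : ℝ) (hb : 0 < b)
    (hP : ∀ v : E, b * ‖v‖ ^ 2 ≤ ⟪P v, v⟫)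
    (z : ℝ → E) (hz : Differentiable ℝ z)
    (hdyn : ∀ t ≥ (0 : ℝ),
      fderiv ℝ (fun y => gradΨ t y) (z t) (deriv z t)
        + deriv (fun s => gradΨ s (z t)) t
      = -P (gradΨ t (z t))) :
    ∀ t ≥ (0 : ℝ),
      ‖gradΨ t (z t)‖ ≤ Real.exp (-b * t) * ‖gradΨ 0 (z 0)‖ :=
  predictor_corrector_gradient_decay_general E Ψ hΨ gradΨ hgrad P b hP z hz hdyn
end

section
/- Let E be a finite-dimensional real inner product space, Ψ : ℝ × E → ℝ twice continuously differentiable with ⟨∇²_{yy}Ψ(t,y)v, v⟩ ≥ a‖v‖² for all t ≥ 0, y, v ∈ E, where a > 0 (uniform strong convexity in the second argument). Let P : E → E be a continuous linear map with ⟨P v, v⟩ ≥ b‖v‖² for all v, where b > 0. Suppose z : ℝ → E is differentiable and satisfies ∇²_{yy}Ψ(t, z(t))(z'(t)) + ∂_t∇Ψ(t, z(t)) = -P(∇Ψ(t, z(t))) for all t ≥ 0, and suppose ŷ* : ℝ → E satisfies ∇Ψ(t, ŷ*(t)) = 0 for all t ≥ 0. Then for all t ≥ 0, ‖z(t) - ŷ*(t)‖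 ≤ C e^{-bt}, where C = (1/a)·‖∇Ψ(0, z(0))‖. -/
open scoped RealInnerProductSpace

/-!
Along the dynamics the curve `g t = ∇Ψ(t, z t)` solves `g' = -P g`, so the coercivity of `P`
makes `‖e^{b t} • g t‖` nonincreasing and `‖g t‖ ≤ ‖g 0‖ e^{-b t}`. Strong convexity of
`Ψ(t, ·)` makes `∇Ψ(t, ·)` strongly monotone (mean value theorem on a segment), whence
`a ‖z t - ŷ* t‖ ≤ ‖∇Ψ(t, z t) - ∇Ψ(t, ŷ* t)‖ = ‖g t‖`.
-/

open InnerProductSpace ContinuousLinearMap Function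

section ChainRule

variable {E F : Type*} [NormedAddCommGroup E] [NormedSpace ℝ E]
  [NormedAddCommGroup F] [NormedSpace ℝ F]

theorem hasDerivAt_apply_of_differentiableAt_uncurry {f : ℝ → E → F} {z : ℝ → E} {z' : E}
    {t : ℝ} (hz : HasDerivAt z z' t) (hf : DifferentiableAt ℝ (uncurry f) (t, z t)) :
    HasDerivAt (fun s => f s (z s))
      (fderiv ℝ (f t) (z t) z' + deriv (fun s => f s (z t)) t) t := by
  set L := fderiv ℝ (uncurry f) (t, z t)
  have hpartial_y : HasFDerivAt (f t) (L.comp (inr ℝ ℝ E)) (z t) :=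
    hf.hasFDerivAt.comp (z t) (hasFDerivAt_prodMk_right t (z t))
  have hpartial_t : HasDerivAt (fun s => f s (z t)) (L (1, 0)) t :=
    (hf.hasFDerivAt.comp_hasDerivAt t ((hasDerivAt_id t).prodMk (hasDerivAt_const t (z t))) :)
  have htotal : HasDerivAt (fun s => f s (z s)) (L (1, z')) t :=
    (hf.hasFDerivAt.comp_hasDerivAt t ((hasDerivAt_id t).prodMk hz) :)
  rw [hpartial_y.fderiv, hpartial_t.deriv, ContinuousLinearMap.comp_apply, inr_apply, add_comm,
    ← L.map_add]
  simpa using htotal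

end ChainRule

section Decay

variable {E : Type*} [NormedAddCommGroup E] [InnerProductSpace ℝ E]

theorem antitoneOn_norm_of_inner_hasDerivAt_nonpos {h h' : ℝ → E}
    (hh : ∀ t ≥ (0 : ℝ), HasDerivAt h (h' t) t) (hneg : ∀ t ≥ (0 : ℝ), ⟪h t, h' t⟫ ≤ 0) :
    AntitoneOn (‖h ·‖) (Set.Ici 0) := by
  have hsq : AntitoneOn (‖h ·‖ ^ 2) (Set.Ici 0) := by
    refine antitoneOn_of_hasDerivWithinAt_nonpos (f' := fun t => 2 * ⟪h t, h' t⟫) (convex_Ici 0)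
      (fun t ht => (hh t ht).norm_sq.continuousAt.continuousWithinAt)
      (fun t ht => ?_) (fun t ht => ?_)
    · rw [interior_Ici] at ht
      exact (hh t (le_of_lt ht)).norm_sq.hasDerivWithinAt
    · rw [interior_Ici] at ht
      exact mul_nonpos_of_nonneg_of_nonpos zero_le_two (hneg t (le_of_lt ht))
  intro s hs t ht hst
  exact (pow_le_pow_iff_left₀ (norm_nonneg _) (norm_nonneg _) two_ne_zero).1 (hsq hs ht hst)

theorem norm_le_norm_zero_mul_exp_of_inner_hasDerivAt_le {g g' : ℝ → E} {b : ℝ}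
    (hg : ∀ t ≥ (0 : ℝ), HasDerivAt g (g' t) t)
    (hinner : ∀ t ≥ (0 : ℝ), ⟪g' t, g t⟫ ≤ -b * ‖g t‖ ^ 2) :
    ∀ t ≥ (0 : ℝ), ‖g t‖ ≤ ‖g 0‖ * Real.exp (-b * t) := by
  set h : ℝ → E := fun t => Real.exp (b * t) • g t
  have hh : ∀ t ≥ (0 : ℝ), HasDerivAt h
      (Real.exp (b * t) • g' t + (Real.exp (b * t) * b) • g t) t := fun t ht => by
    convert ((hasDerivAt_id t).const_mul b).exp.smul (hg t ht) using 1
    · rfl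
    · simp only [id, mul_one]
  have hneg : ∀ t ≥ (0 : ℝ),
      ⟪h t, Real.exp (b * t) • g' t + (Real.exp (b * t) * b) • g t⟫ ≤ 0 := by
    intro t ht
    have hexp := Real.exp_pos (b * t)
    simp only [h, inner_add_right, inner_smul_left, inner_smul_right, real_inner_self_eq_norm_sq,
      real_inner_comm (g' t), RCLike.conj_to_real]
    nlinarith [mul_le_mul_of_nonneg_left (hinner t ht) (mul_pos hexp hexp).le]
  intro t ht
  have hmono := antitoneOn_norm_of_inner_hasDerivAt_nonpos hh hneg Set.self_mem_Ici ht ht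
  simp only [h, norm_smul, Real.norm_of_nonneg (Real.exp_pos _).le, mul_zero, Real.exp_zero,
    norm_one, one_mul] at hmono
  rw [neg_mul, Real.exp_neg, ← div_eq_mul_inv, le_div_iff₀ (Real.exp_pos _), mul_comm]
  exact hmono

end Decay

section StrongMonotone

variable {E : Type*} [NormedAddCommGroup E] [InnerProductSpace ℝ E]

theorem mul_norm_sub_sq_le_inner_of_fderiv {F : E → E} {a : ℝ} (hF : Differentiable ℝ F)
    (hstrong : ∀ y v, a * ‖v‖ ^ 2 ≤ ⟪fderiv ℝ F y v, v⟫) (x y : E) :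
    a * ‖x - y‖ ^ 2 ≤ ⟪F x - F y, x - y⟫ := by
  set d := x - y
  have hderiv : ∀ s : ℝ, HasDerivAt (fun s : ℝ => ⟪F (y + s • d), d⟫)
      ⟪fderiv ℝ F (y + s • d) d, d⟫ s := fun s => by
    have hline : HasDerivAt (fun s : ℝ => y + s • d) d s := by
      simpa using ((hasDerivAt_id s).smul_const d).const_add y
    simpa using ((hF _).hasFDerivAt.comp_hasDerivAt s hline).inner ℝ (hasDerivAt_const s d)
  obtain ⟨c, -, hc⟩ := exists_hasDerivAt_eq_slope _ _ zero_lt_one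
    (fun s _ => (hderiv s).continuousAt.continuousWithinAt) (fun s _ => hderiv s)
  have hxy : y + d = x := add_sub_cancel y x
  simp only [one_smul, zero_smul, add_zero, sub_zero, div_one, hxy, ← inner_sub_left] at hc
  exact hc ▸ hstrong _ d

theorem mul_norm_sub_le_norm_sub_of_fderiv {F : E → E} {a : ℝ} (hF : Differentiable ℝ F)
    (hstrong : ∀ y v, a * ‖v‖ ^ 2 ≤ ⟪fderiv ℝ F y v, v⟫) (x y : E) :
    a * ‖x - y‖ ≤ ‖F x - F y‖ := by
  rcases (norm_nonneg (x - y)).eq_or_lt with hzero | hpos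
  · rw [← hzero, mul_zero]
    exact norm_nonneg _
  · refine le_of_mul_le_mul_right ?_ hpos
    calc a * ‖x - y‖ * ‖x - y‖ = a * ‖x - y‖ ^ 2 := by ring
      _ ≤ ⟪F x - F y, x - y⟫ := mul_norm_sub_sq_le_inner_of_fderiv hF hstrong x y
      _ ≤ ‖F x - F y‖ * ‖x - y‖ := real_inner_le_norm _ _

end StrongMonotone

section PartialGradient

variable {E : Type*} [NormedAddCommGroup E] [InnerProductSpace ℝ E] [CompleteSpace E]

theorem gradient_comp_prodMk_right {Ψ : ℝ × E → ℝ} (hΨ : Differentiable ℝ Ψ) (t : ℝ) (y : E) :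
    gradient (fun y' => Ψ (t, y')) y =
      (toDual ℝ E).symm ((fderiv ℝ Ψ (t, y)).comp (inr ℝ ℝ E)) := by
  exact congrArg _ ((hΨ (t, y)).hasFDerivAt.comp y (hasFDerivAt_prodMk_right t y)).fderiv

theorem contDiff_uncurry_gradient_comp_prodMk_right {Ψ : ℝ × E → ℝ} (hΨ : ContDiff ℝ 2 Ψ) :
    ContDiff ℝ 1 (fun p : ℝ × E => gradient (fun y => Ψ (p.1, y)) p.2) := by
  simp_rw [gradient_comp_prodMk_right (hΨ.differentiable two_ne_zero)]
  exact (toDual ℝ E).symm.toContinuousLinearEquiv.contDiff.comp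
    (((compL ℝ E (ℝ × E) ℝ).flip (inr ℝ ℝ E)).contDiff.comp (hΨ.fderiv_right le_rfl))

end PartialGradient

theorem predictor_corrector_tracking_general
    (E : Type*) [NormedAddCommGroup E] [InnerProductSpace ℝ E]
    [FiniteDimensional ℝ E]
    (Ψ : ℝ × E → ℝ) (hΨ : ContDiff ℝ 2 Ψ)
    (gradΨ : ℝ → E → E)
    (hgrad : ∀ t y, gradΨ t y = gradient (fun y' => Ψ (t, y')) y)
    (a : ℝ) (ha : 0 < a)
    (hstrong : ∀ t ≥ (0 : ℝ), ∀ y v : E,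
      a * ‖v‖ ^ 2 ≤ ⟪fderiv ℝ (fun y' => gradΨ t y') y v, v⟫)
    (P : E →L[ℝ] E) (b : ℝ)
    (hP : ∀ v : E, b * ‖v‖ ^ 2 ≤ ⟪P v, v⟫)
    (z : ℝ → E) (hz : Differentiable ℝ z)
    (hdyn : ∀ t ≥ (0 : ℝ),
      fderiv ℝ (fun y => gradΨ t y) (z t) (deriv z t)
        + deriv (fun s => gradΨ s (z t)) t
      = -P (gradΨ t (z t)))
    (ystar : ℝ → E)
    (hcrit : ∀ t ≥ (0 : ℝ), gradΨ t (ystar t) = 0) :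
    ∀ t ≥ (0 : ℝ),
      ‖z t - ystar t‖ ≤ (1 / a) * ‖gradΨ 0 (z 0)‖ * Real.exp (-b * t) := by
  have hG : Differentiable ℝ (uncurry gradΨ) := by
    have : uncurry gradΨ = fun p : ℝ × E => gradient (fun y => Ψ (p.1, y)) p.2 :=
      funext fun p => hgrad p.1 p.2
    exact this ▸ (contDiff_uncurry_gradient_comp_prodMk_right hΨ).differentiable one_ne_zero
  have hdecay := norm_le_norm_zero_mul_exp_of_inner_hasDerivAt_le
    (b := b) (g := fun s => gradΨ s (z s)) (g' := fun s => -P (gradΨ s (z s)))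
    (fun s hs => hdyn s hs ▸
      hasDerivAt_apply_of_differentiableAt_uncurry (hz s).hasDerivAt (hG _))
    (fun s _ => by rw [inner_neg_left]; linarith [hP (gradΨ s (z s))])
  intro t ht
  have hpartial : Differentiable ℝ (gradΨ t) :=
    hG.comp ((differentiable_const t).prodMk differentiable_id)
  have hmono := mul_norm_sub_le_norm_sub_of_fderiv hpartial (hstrong t ht) (z t) (ystar t)
  rw [hcrit t ht, sub_zero] at hmono
  calc ‖z t - ystar t‖ ≤ ‖gradΨ t (z t)‖ / a := by rwa [le_div_iff₀ ha, mul_comm]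
    _ ≤ ‖gradΨ 0 (z 0)‖ * Real.exp (-b * t) / a := by gcongr; exact hdecay t ht
    _ = (1 / a) * ‖gradΨ 0 (z 0)‖ * Real.exp (-b * t) := by ring

/-- Lemma 1 (exponential tracking): along the predictor–corrector interior
point dynamics, the trajectory `z` tracks the time-varying critical point
`ŷ*` of the uniformly strongly convex potential `Ψ(t, ·)` at exponential
rate: `‖z t - ŷ* t‖ ≤ C e^{-b t}` with `C = (1/a) ‖∇Ψ(0, z 0)‖`. -/
theorem predictor_corrector_tracking
    (E : Type*) [NormedAddCommGroup E] [InnerProductSpace ℝ E]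
    [FiniteDimensional ℝ E]
    (Ψ : ℝ × E → ℝ) (hΨ : ContDiff ℝ 2 Ψ)
    (gradΨ : ℝ → E → E)
    (hgrad : ∀ t y, gradΨ t y = gradient (fun y' => Ψ (t, y')) y)
    (a : ℝ) (ha : 0 < a)
    (hstrong : ∀ t ≥ (0 : ℝ), ∀ y v : E,
      a * ‖v‖ ^ 2 ≤ ⟪fderiv ℝ (fun y' => gradΨ t y') y v, v⟫)
    (P : E →L[ℝ] E) (b : ℝ) (hb : 0 < b)
    (hP : ∀ v : E, b * ‖v‖ ^ 2 ≤ ⟪P v, v⟫)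
    (z : ℝ → E) (hz : Differentiable ℝ z)
    (hdyn : ∀ t ≥ (0 : ℝ),
      fderiv ℝ (fun y => gradΨ t y) (z t) (deriv z t)
        + deriv (fun s => gradΨ s (z t)) t
      = -P (gradΨ t (z t)))
    (ystar : ℝ → E)
    (hcrit : ∀ t ≥ (0 : ℝ), gradΨ t (ystar t) = 0) :
    ∀ t ≥ (0 : ℝ),
      ‖z t - ystar t‖ ≤ (1 / a) * ‖gradΨ 0 (z 0)‖ * Real.exp (-b * t) :=
  predictor_corrector_tracking_general E Ψ hΨ gradΨ hgrad a ha hstrong P b hP z hz hdyn ystar hcrit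
end

section
/- Let c ≥ 1, and let h : Fin c → ℝ and w : Fin c → ℝ with wᵢ > 0 for every i. If 1 - ∑_{i=1}^{c} exp(-wᵢ hᵢ) ≥ 0, then hᵢ ≥ 0 for every i; moreover, if c ≥ 2 then hᵢ > 0 for every i. -/
/-!
Every summand `exp (-(wᵢ hᵢ))` is positive and bounded by the whole sum, which is at most `1`;
hence `wᵢ hᵢ ≥ 0`. A second summand, being positive, makes the bound on the first strict.
-/

open Finset Real

section SumExpLeOne

variable {ι : Type*} [Fintype ι] {g : ι → ℝ}

theorem nonpos_of_sum_exp_le_one (hg : ∑ k, exp (g k) ≤ 1) (i : ι) : g i ≤ 0 :=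
  exp_le_one_iff.mp <|
    (single_le_sum (fun k _ => (exp_pos (g k)).le) (mem_univ i)).trans hg

theorem neg_of_sum_exp_le_one (hg : ∑ k, exp (g k) ≤ 1) {i j : ι} (hij : i ≠ j) : g i < 0 := by
  have hpair := add_le_sum (fun k _ => (exp_pos (g k)).le) (mem_univ i) (mem_univ j) hij
  exact exp_lt_one_iff.mp (by linarith [exp_pos (g j)])

end SumExpLeOne

theorem ccbf_superlevel_subset_general (c : ℕ)
    (h w : Fin c → ℝ) (hw : ∀ i, 0 < w i)
    (hH : 0 ≤ 1 - ∑ i, Real.exp (-(w i * h i))) :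
    (∀ i, 0 ≤ h i) ∧ (2 ≤ c → ∀ i, 0 < h i) := by
  have hsum : ∑ i, exp (-(w i * h i)) ≤ 1 := sub_nonneg.mp hH
  refine ⟨fun i => ?_, fun hc i => ?_⟩
  · exact (mul_nonneg_iff_of_pos_left (hw i)).mp <|
      neg_nonpos.mp (nonpos_of_sum_exp_le_one hsum i)
  · have : Nontrivial (Fin c) := Fin.nontrivial_iff_two_le.mpr hc
    obtain ⟨j, hji⟩ := exists_ne i
    exact (mul_pos_iff_of_pos_left (hw i)).mp <|
      neg_neg_iff_pos.mp (neg_of_sum_exp_le_one hsum hji.symm)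

/-- The zero superlevel set of the exponential consolidated CBF candidate
`H = 1 - ∑ i, exp (-(wᵢ hᵢ))` with positive weights is contained in the
complete constraint set: `H ≥ 0` forces `hᵢ ≥ 0` for every `i`, and even
`hᵢ > 0` when there are at least two constraints. -/
theorem ccbf_superlevel_subset (c : ℕ) (hc : 1 ≤ c)
    (h w : Fin c → ℝ) (hw : ∀ i, 0 < w i)
    (hH : 0 ≤ 1 - ∑ i, Real.exp (-(w i * h i))) :
    (∀ i, 0 ≤ h i) ∧ (2 ≤ c → ∀ i, 0 < h i) :=
  ccbf_superlevel_subset_general c h w hw hH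
end

section
/- Let c ≥ 1, let X be any set, let hᵢ : X → ℝ for i ∈ Fin c, and let w, w' : Fin c → ℝ satisfy 0 < wᵢ ≤ w'ᵢ for all i. Then {x ∈ X : 1 - ∑_{i=1}^{c} exp(-wᵢ hᵢ(x)) ≥ 0} ⊆ {x ∈ X : 1 - ∑_{i=1}^{c} exp(-w'ᵢ hᵢ(x)) ≥ 0}; that is, the zero superlevel set of the exponential consolidated barrier candidate is monotone non-decreasing in the weights. -/
open scoped BigOperators

/-! Each summand is at most the whole sum, hence at most `1`, which forces `hᵢ x ≥ 0`; on that
region every summand `exp (-(wᵢ hᵢ x))` is antitone in `wᵢ`. -/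

namespace Real

lemma nonneg_of_exp_neg_mul_le_one {a t : ℝ} (ha : 0 < a) (h : exp (-(a * t)) ≤ 1) : 0 ≤ t :=
  nonneg_of_mul_nonneg_right (neg_nonpos.mp (exp_le_one_iff.mp h)) ha

lemma exp_neg_mul_le_exp_neg_mul {a b t : ℝ} (hab : a ≤ b) (ht : 0 ≤ t) :
    exp (-(b * t)) ≤ exp (-(a * t)) :=
  exp_le_exp.mpr (neg_le_neg (mul_le_mul_of_nonneg_right hab ht))

end Real

open Real Finset in
theorem ccbf_superlevel_monotone_in_weights_general (c : ℕ)
    (X : Type*) (h : Fin c → X → ℝ)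
    (w w' : Fin c → ℝ)
    (hw : ∀ i, 0 < w i) (hww' : ∀ i, w i ≤ w' i) :
    {x : X | 0 ≤ 1 - ∑ i, Real.exp (-(w i * h i x))} ⊆
      {x : X | 0 ≤ 1 - ∑ i, Real.exp (-(w' i * h i x))} := by
  intro x hx
  simp only [Set.mem_ofPred_eq, sub_nonneg] at hx ⊢
  have hterm_le_one : ∀ i, exp (-(w i * h i x)) ≤ 1 := fun i =>
    (single_le_sum (f := fun j => exp (-(w j * h j x)))
      (fun j _ => (exp_pos _).le) (mem_univ i)).trans hx
  calc ∑ i, exp (-(w' i * h i x))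
      ≤ ∑ i, exp (-(w i * h i x)) := sum_le_sum fun i _ =>
        exp_neg_mul_le_exp_neg_mul (hww' i) (nonneg_of_exp_neg_mul_le_one (hw i) (hterm_le_one i))
    _ ≤ 1 := hx

/-- Monotonicity of the zero superlevel set of the exponential consolidated
barrier candidate in the weights: if `0 < wᵢ ≤ w'ᵢ` for every `i`, then
`{x | 1 - ∑ i, exp (-(wᵢ hᵢ x)) ≥ 0} ⊆ {x | 1 - ∑ i, exp (-(w'ᵢ hᵢ x)) ≥ 0}`. -/
theorem ccbf_superlevel_monotone_in_weights (c : ℕ) (hc : 1 ≤ c)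
    (X : Type*) (h : Fin c → X → ℝ)
    (w w' : Fin c → ℝ)
    (hw : ∀ i, 0 < w i) (hww' : ∀ i, w i ≤ w' i) :
    {x : X | 0 ≤ 1 - ∑ i, Real.exp (-(w i * h i x))} ⊆
      {x : X | 0 ≤ 1 - ∑ i, Real.exp (-(w' i * h i x))} :=
  ccbf_superlevel_monotone_in_weights_general c X h w w' hw hww'
end

section
/- Let c ≥ 1, let h̄ᵢ : ℝ → ℝ (i ∈ Fin c) be differentiable functions (the constraint functions evaluated along the closed-loop trajectory, h̄ᵢ(t) = hᵢ(t, x(t))), and let w : ℝ → ℝᶜ be differentiable with wᵢ(t) > 0 for all t ≥ 0 and all i. Define H(t) = 1 - ∑_{i=1}^{c} exp(-wᵢ(t) h̄ᵢ(t)). Let α : ℝ → ℝ be locally Lipschitz, strictly increasing, with α(0) = 0. If H(0) ≥ 0 and H'(t) ≥ -α(H(t)) for all t ≥ 0, then h̄ᵢ(t) ≥ 0 for every i and every t ≥ 0. -/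
/-!
Whenever `H` is negative, the C-CBF condition gives `H' ≥ -α(H) > 0`; so after the last time
`t₀ ≤ t` with `H t₀ ≥ 0`, `H` would be strictly increasing yet negative, so `H` stays
nonnegative. Finally `H ≥ 0` bounds each term `exp (-(wᵢ h̄ᵢ))` by `1`, so that `wᵢ h̄ᵢ ≥ 0`.
-/

open Set

theorem nonneg_of_deriv_pos_of_neg {f : ℝ → ℝ} {a : ℝ} (hf : ContinuousOn f (Ici a))
    (ha : 0 ≤ f a) (hderiv : ∀ t ≥ a, f t < 0 → 0 < deriv f t) :
    ∀ t ≥ a, 0 ≤ f t := by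
  intro t hat
  by_contra! hft
  set S := {s ∈ Icc a t | 0 ≤ f s}
  have hS_closed : IsClosed S :=
    (hf.mono Icc_subset_Ici_self).preimage_isClosed_of_isClosed isClosed_Icc isClosed_Ici
  have hS_compact : IsCompact S := isCompact_Icc.of_isClosed_subset hS_closed fun _ hs => hs.1
  obtain ⟨t₀, ⟨⟨hat₀, ht₀t⟩, hft₀⟩, ht₀_max⟩ :=
    hS_compact.exists_isGreatest ⟨a, ⟨left_mem_Icc.mpr hat, ha⟩⟩
  have hneg : ∀ s ∈ Ioc t₀ t, f s < 0 := fun s ⟨ht₀s, hst⟩ => by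
    by_contra! hfs
    exact (ht₀_max ⟨⟨hat₀.trans ht₀s.le, hst⟩, hfs⟩).not_gt ht₀s
  have ht₀t : t₀ < t := ht₀t.lt_of_ne (by rintro rfl; exact hft.not_ge hft₀)
  have hmono : StrictMonoOn f (Icc t₀ t) := by
    refine strictMonoOn_of_deriv_pos (convex_Icc t₀ t)
      (hf.mono (Icc_subset_Ici_self.trans (Ici_subset_Ici.mpr hat₀))) fun s hs => ?_
    rw [interior_Icc] at hs
    exact hderiv s (hat₀.trans hs.1.le) (hneg s (Ioo_subset_Ioc_self hs))
  have hft₀t := hmono (left_mem_Icc.mpr ht₀t.le) (right_mem_Icc.mpr ht₀t.le) ht₀t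
  linarith

theorem nonneg_of_sum_exp_neg_mul_le_one {ι : Type*} [Fintype ι] {w h : ι → ℝ} {i : ι}
    (hw : 0 < w i) (hsum : ∑ j, Real.exp (-(w j * h j)) ≤ 1) : 0 ≤ h i := by
  have hexp : Real.exp (-(w i * h i)) ≤ 1 :=
    (Finset.single_le_sum (f := fun j => Real.exp (-(w j * h j)))
      (fun j _ => (Real.exp_pos _).le) (Finset.mem_univ i)).trans hsum
  have hwh : 0 ≤ w i * h i := by linarith [Real.exp_le_one_iff.mp hexp]
  exact nonneg_of_mul_nonneg_right hwh hw

theorem ccbf_complete_constraint_satisfaction_general (c : ℕ)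
    (hbar : Fin c → ℝ → ℝ) (hbar_diff : ∀ i, Differentiable ℝ (hbar i))
    (w : ℝ → Fin c → ℝ) (hw_diff : Differentiable ℝ w)
    (hw_pos : ∀ t ≥ (0 : ℝ), ∀ i, 0 < w t i)
    (H : ℝ → ℝ)
    (hH : ∀ t, H t = 1 - ∑ i, Real.exp (-(w t i * hbar i t)))
    (α : ℝ → ℝ)
    (hα_mono : StrictMono α)
    (hα_zero : α 0 = 0)
    (h_init : 0 ≤ H 0)
    (h_cond : ∀ t ≥ (0 : ℝ), deriv H t ≥ -α (H t)) :
    ∀ i, ∀ t ≥ (0 : ℝ), 0 ≤ hbar i t := by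
  have hbar_cont : ∀ i, Continuous (hbar i) := fun i => (hbar_diff i).continuous
  have hw_cont : Continuous w := hw_diff.continuous
  have hH_cont : Continuous H := by
    rw [funext hH]
    fun_prop
  have hH_nonneg : ∀ t ≥ (0 : ℝ), 0 ≤ H t := by
    refine nonneg_of_deriv_pos_of_neg hH_cont.continuousOn h_init fun t ht hHt => ?_
    have hα_neg : α (H t) < 0 := hα_zero ▸ hα_mono hHt
    linarith [h_cond t ht]
  intro i t ht
  exact nonneg_of_sum_exp_neg_mul_le_one (w := w t) (h := fun j => hbar j t) (hw_pos t ht i)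
    (by linarith [hH t, hH_nonneg t ht])

/-- Theorem 3 (complete constraint satisfaction): if along the closed-loop
trajectory the consolidated CBF `H t = 1 - ∑ i, exp (-(wᵢ(t) h̄ᵢ(t)))`
(with differentiable data and positive weights) satisfies `H 0 ≥ 0` and the
C-CBF condition `H' t ≥ -α (H t)` for all `t ≥ 0`, where `α` is locally
Lipschitz, strictly increasing and `α 0 = 0`, then every constraint is
satisfied for all time: `h̄ᵢ(t) ≥ 0` for all `i` and all `t ≥ 0`. -/
theorem ccbf_complete_constraint_satisfaction (c : ℕ) (hc : 1 ≤ c)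
    (hbar : Fin c → ℝ → ℝ) (hbar_diff : ∀ i, Differentiable ℝ (hbar i))
    (w : ℝ → Fin c → ℝ) (hw_diff : Differentiable ℝ w)
    (hw_pos : ∀ t ≥ (0 : ℝ), ∀ i, 0 < w t i)
    (H : ℝ → ℝ)
    (hH : ∀ t, H t = 1 - ∑ i, Real.exp (-(w t i * hbar i t)))
    (α : ℝ → ℝ)
    (hα_lip : LocallyLipschitz α)
    (hα_mono : StrictMono α)
    (hα_zero : α 0 = 0)
    (h_init : 0 ≤ H 0)
    (h_cond : ∀ t ≥ (0 : ℝ), deriv H t ≥ -α (H t)) :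
    ∀ i, ∀ t ≥ (0 : ℝ), 0 ≤ hbar i t :=
  ccbf_complete_constraint_satisfaction_general c hbar hbar_diff w hw_diff hw_pos H hH α hα_mono
    hα_zero h_init h_cond
end

section
/- Let p = (√17 - 1)/2 and k = (ln 2)/p². Then for every real x with p < x ≤ 2 and every u ∈ [-1, 1], it holds that x·(e^{k x²} - 1) + (4 - x²)·u > 0. -/
/-!
With `p = (√17 - 1)/2` we have `p² + p = 4`, and `k p² = ln 2`. For `x > p` this gives
`e^{k x²} > 2`, so the drift `x (e^{k x²} - 1)` exceeds `x`, while for `x ≤ 2` the control term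
is at least `-(4 - x²)`. Hence `ẋ > x² + x - 4 > p² + p - 4 = 0`.
-/

open Real

lemma sqrt_seventeen_sub_one_div_two_pos : 0 < (√17 - 1) / 2 := by
  have : (4 : ℝ) < √17 := by
    rw [show (4 : ℝ) = √(4 ^ 2) by simp]
    exact sqrt_lt_sqrt (by norm_num) (by norm_num)
  linarith

lemma sqrt_seventeen_sub_one_div_two_sq_add_self :
    ((√17 - 1) / 2) ^ 2 + (√17 - 1) / 2 = 4 := by
  have : √17 ^ 2 = 17 := sq_sqrt (by norm_num)
  linear_combination this / 4

lemma lt_exp_log_div_sq_mul_sq {c a x : ℝ} (hc : 1 < c) (ha : a ≠ 0) (h : a ^ 2 < x ^ 2) :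
    c < exp (log c / a ^ 2 * x ^ 2) := calc
  c = exp (log c / a ^ 2 * a ^ 2) := by
    rw [div_mul_cancel₀ _ (pow_ne_zero 2 ha), exp_log (zero_lt_one.trans hc)]
  _ < exp (log c / a ^ 2 * x ^ 2) :=
    exp_lt_exp.mpr (mul_lt_mul_of_pos_left h (div_pos (log_pos hc) (by positivity)))

lemma sub_lt_mul_sub_one_add_mul {x E b u : ℝ} (hx : 0 < x) (hE : 2 < E) (hb : 0 ≤ b)
    (hu : u ∈ Set.Icc (-1 : ℝ) 1) : x - b < x * (E - 1) + b * u := by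
  have hbu : -b ≤ b * u := by nlinarith [hu.1]
  nlinarith [mul_pos hx (sub_pos.mpr hE)]

/-- The infinite potential well of the 1-D example: for the system
`ẋ = x (e^{k x²} - 1) + (4 - x²) u` with `|u| ≤ 1`, `p = (√17 - 1)/2`
(the positive root of `p² + p = 4`) and `k = ln 2 / p²`, once `p < x ≤ 2`
the derivative is strictly positive for every admissible control, so the
constraint `x ≤ 2` is doomed to be violated. -/
theorem one_dim_potential_well :
    ∀ x : ℝ, (Real.sqrt 17 - 1) / 2 < x → x ≤ 2 →
      ∀ u ∈ Set.Icc (-1 : ℝ) 1,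
        0 < x * (Real.exp ((Real.log 2 / ((Real.sqrt 17 - 1) / 2) ^ 2) * x ^ 2) - 1)
            + (4 - x ^ 2) * u := by
  intro x hpx hx2 u hu
  have hp := sqrt_seventeen_sub_one_div_two_pos
  have hx := hp.trans hpx
  have hpx_sq : ((√17 - 1) / 2) ^ 2 < x ^ 2 := pow_lt_pow_left₀ hpx hp.le two_ne_zero
  have hexp := lt_exp_log_div_sq_mul_sq one_lt_two hp.ne' hpx_sq
  have hcontrol : 0 ≤ 4 - x ^ 2 := by nlinarith
  have := sub_lt_mul_sub_one_add_mul hx hexp hcontrol hu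
  linarith [sqrt_seventeen_sub_one_div_two_sq_add_self]
end
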